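/- arXiv:2209.04329 — 4 statements merged into one kernel-verified Lean document; each statement's English description precedes it below -/
import Mathlib

section
/- Let μ and ν be probability measures on ℝ, let p ∈ (0,1] and suppose p·ν ≤ μ (as measures, i.e. p·ν(A) ≤ μ(A) for every Borel set A). Let q ∈ ℝ satisfy μ([q, ∞)) = p, and suppose the identity function is integrable with respect to both μ and ν. Then ∫ y dν(y) ≤ (1/p) ∫_{[q,∞)} y dμ(y). That is, the mean of the component ν of the mixture μ is at most the mean of μ trimmed to its upper p-fraction. -/
/-!
Since `y ≤ q + (y - q)⁺`, the mean of `ν` is at most `q + ∫ (y - q)⁺ dν`. The function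
`(y - q)⁺` is nonnegative, so `p • ν ≤ μ` gives `p ∫ (y - q)⁺ dν ≤ ∫ (y - q)⁺ dμ`, and the latter
equals `∫_{[q,∞)} y dμ - q p` because `μ([q,∞)) = p`. Multiplying the first bound by `p`, the
terms `± q p` cancel.
-/

open MeasureTheory Set

namespace MeasureTheory

theorem mul_integral_le_of_smul_le {α : Type*} [MeasurableSpace α] {μ ν : Measure α}
    {f : α → ℝ} {c : ℝ} (hc : 0 ≤ c) (hle : ENNReal.ofReal c • ν ≤ μ) (hf : 0 ≤ f)
    (hfi : Integrable f μ) : c * ∫ x, f x ∂ν ≤ ∫ x, f x ∂μ := by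
  have h := integral_mono_measure hle (ae_of_all _ hf) hfi
  rwa [integral_smul_measure, ENNReal.toReal_ofReal hc, smul_eq_mul] at h

theorem integral_id_le_add_integral_posPart_sub (ν : Measure ℝ) [IsProbabilityMeasure ν]
    (hν : Integrable (fun y => y) ν) (q : ℝ) :
    ∫ y, y ∂ν ≤ q + ∫ y, max (y - q) 0 ∂ν := by
  have hpos : Integrable (fun y => max (y - q) 0) ν := (hν.sub (integrable_const q)).pos_part
  calc ∫ y, y ∂ν ≤ ∫ y, (q + max (y - q) 0) ∂ν :=
        integral_mono hν ((integrable_const q).add hpos) fun y => by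
          linarith [le_max_left (y - q) 0]
    _ = q + ∫ y, max (y - q) 0 ∂ν := by
        rw [integral_add (integrable_const q) hpos, integral_const, probReal_univ, one_smul]

theorem integral_posPart_sub_eq_setIntegral_Ici (μ : Measure ℝ) [IsFiniteMeasure μ]
    (hμ : Integrable (fun y => y) μ) (q : ℝ) :
    ∫ y, max (y - q) 0 ∂μ = ∫ y in Ici q, y ∂μ - q * μ.real (Ici q) := by
  have hind : (fun y => max (y - q) 0) = (Ici q).indicator (fun y => y - q) := by
    ext y
    by_cases hy : q ≤ y
    · simp [hy]
    · simp [hy, (not_le.1 hy).le]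
  rw [hind, integral_indicator measurableSet_Ici,
    integral_sub hμ.integrableOn (integrable_const q), setIntegral_const, smul_eq_mul, mul_comm]

end MeasureTheory

/-- Measure-theoretic core of the upper Lee bound: if `p·ν ≤ μ` and `q` is such that
`μ([q,∞)) = p`, the mean of the mixture component `ν` is at most the mean of `μ`
trimmed to its upper `p`-fraction. -/
theorem component_mean_le_upper_trimmed_mean (μ ν : Measure ℝ)
    [IsProbabilityMeasure μ] [IsProbabilityMeasure ν]
    (p : ℝ) (hp : p ∈ Set.Ioc (0 : ℝ) 1)
    (hdom : (ENNReal.ofReal p) • ν ≤ μ)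
    (q : ℝ) (hq : μ (Set.Ici q) = ENNReal.ofReal p)
    (hμi : Integrable (fun y : ℝ => y) μ) (hνi : Integrable (fun y : ℝ => y) ν) :
    (∫ y, y ∂ν) ≤ (1 / p) * ∫ y in Set.Ici q, y ∂μ := by
  obtain ⟨hp0, -⟩ := hp
  have hμq : μ.real (Ici q) = p := by rw [Measure.real, hq, ENNReal.toReal_ofReal hp0.le]
  have hexcess : p * ∫ y, max (y - q) 0 ∂ν ≤ ∫ y in Ici q, y ∂μ - q * p := by
    have h := mul_integral_le_of_smul_le hp0.le hdom (fun y => le_max_right (y - q) 0)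
      (hμi.sub (integrable_const q)).pos_part
    rwa [integral_posPart_sub_eq_setIntegral_Ici μ hμi q, hμq] at h
  rw [one_div, inv_mul_eq_div, le_div_iff₀ hp0]
  calc (∫ y, y ∂ν) * p ≤ (q + ∫ y, max (y - q) 0 ∂ν) * p :=
        mul_le_mul_of_nonneg_right (integral_id_le_add_integral_posPart_sub ν hνi q) hp0.le
    _ ≤ ∫ y in Ici q, y ∂μ := by linarith
end

section
/- Let μ and ν be probability measures on ℝ, let p ∈ (0,1] and suppose p·ν ≤ μ (as measures, i.e. p·ν(A) ≤ μ(A) for every Borel set A). Let q ∈ ℝ satisfy μ((−∞, q]) = p, and suppose the identity function is integrable with respect to both μ and ν. Then ∫ y dν(y) ≥ (1/p) ∫_{(−∞,q]} y dμ(y). That is, the mean of the component ν of the mixture μ is at least the mean of μ trimmed to its lower p-fraction. -/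
/-!
Write `g := 𝟙_{(-∞,q]} · (y - q)`, a nonpositive function. Since `g ≤ y - q`, its `ν`-integral is
at most `∫ y dν - q`; since `g ≤ 0` and `p·ν ≤ μ`, its `μ`-integral is at most `p` times its
`ν`-integral; and because `μ((-∞,q]) = p`, its `μ`-integral is `∫_{(-∞,q]} y dμ - p q`.
Chaining the three gives `∫_{(-∞,q]} y dμ ≤ p ∫ y dν`.
-/

open MeasureTheory Set

theorem integral_le_mul_integral_of_nonpos_of_smul_le {α : Type*} [MeasurableSpace α]
    {μ ν : Measure α} {c : ℝ} (hc : 0 ≤ c) (hdom : ENNReal.ofReal c • ν ≤ μ) {f : α → ℝ}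
    (hf : f ≤ᵐ[μ] 0) (hfi : Integrable f μ) :
    ∫ x, f x ∂μ ≤ c * ∫ x, f x ∂ν := by
  have hneg : ∫ x, -f x ∂(ENNReal.ofReal c • ν) ≤ ∫ x, -f x ∂μ :=
    integral_mono_measure hdom (hf.mono fun _ hx ↦ neg_nonneg.mpr hx) hfi.neg
  rw [integral_smul_measure, ENNReal.toReal_ofReal hc, integral_neg, integral_neg,
    smul_eq_mul] at hneg
  linarith

theorem integral_indicator_Iic_sub_le (ν : Measure ℝ) [IsProbabilityMeasure ν] (q : ℝ)
    (hνi : Integrable (fun y : ℝ ↦ y) ν) :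
    ∫ y, (Iic q).indicator (fun y ↦ y - q) y ∂ν ≤ ∫ y, y ∂ν - q := by
  have hsub : Integrable (fun y : ℝ ↦ y - q) ν := hνi.sub (integrable_const q)
  calc ∫ y, (Iic q).indicator (fun y ↦ y - q) y ∂ν
      ≤ ∫ y, (y - q) ∂ν :=
        integral_mono (hsub.indicator measurableSet_Iic) hsub
          (indicator_le_self' fun y hy ↦ sub_nonneg.mpr (not_le.mp hy).le)
    _ = ∫ y, y ∂ν - q := by simp [integral_sub hνi (integrable_const q)]

/-- Measure-theoretic core of the lower Lee bound: if `p·ν ≤ μ` and `q` is such that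
`μ((-∞,q]) = p`, the mean of the mixture component `ν` is at least the mean of `μ`
trimmed to its lower `p`-fraction. -/
theorem component_mean_ge_lower_trimmed_mean (μ ν : Measure ℝ)
    [IsProbabilityMeasure μ] [IsProbabilityMeasure ν]
    (p : ℝ) (hp : p ∈ Set.Ioc (0 : ℝ) 1)
    (hdom : (ENNReal.ofReal p) • ν ≤ μ)
    (q : ℝ) (hq : μ (Set.Iic q) = ENNReal.ofReal p)
    (hμi : Integrable (fun y : ℝ => y) μ) (hνi : Integrable (fun y : ℝ => y) ν) :
    (1 / p) * (∫ y in Set.Iic q, y ∂μ) ≤ ∫ y, y ∂ν := by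
  have hp0 : 0 < p := hp.1
  set g : ℝ → ℝ := (Iic q).indicator fun y ↦ y - q
  have hgμ : ∫ y, g y ∂μ = ∫ y in Iic q, y ∂μ - q * p := by
    rw [integral_indicator measurableSet_Iic, integral_sub hμi.integrableOn (integrable_const q),
      setIntegral_const, measureReal_def, hq, ENNReal.toReal_ofReal hp0.le, smul_eq_mul, mul_comm]
  have hgμν : ∫ y, g y ∂μ ≤ p * ∫ y, g y ∂ν :=
    integral_le_mul_integral_of_nonpos_of_smul_le hp0.le hdom
      (Filter.Eventually.of_forall (indicator_nonpos fun y hy ↦ sub_nonpos.mpr hy))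
      ((hμi.sub (integrable_const q)).indicator measurableSet_Iic)
  have hgν : p * ∫ y, g y ∂ν ≤ p * (∫ y, y ∂ν - q) :=
    mul_le_mul_of_nonneg_left (integral_indicator_Iic_sub_le ν q hνi) hp0.le
  rw [one_div, inv_mul_le_iff₀ hp0]
  linarith
end

section
/- In the sample selection setup with strong monotonicity, let q ∈ ℝ satisfy P(Y ≤ q | D=1, S=1) = 1 − p₀ and P(Y = q | D=1, S=1) = 0. Then the always-taker average treatment effect satisfies E[Y₁ − Y₀ | S₁ = 1, S₀ = 1] ≤ E[Y | D=1, S=1, Y ≥ q] − E[Y | D=0, S=1]. -/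
/-
Since `D` is independent of the potential outcomes, conditioning on the selected treated
`{D = 1, S₁ = 1}` is the same as conditioning on `{S₁ = 1}`, and likewise for the selected
controls and `{S₀ = 1}`, so the right-hand side equals
`E[Y₁ | S₁ = 1, Y₁ ≥ q] - E[Y₀ | S₀ = 1]`, while by monotonicity the always-takers are
`{S₀ = 1} ⊆ {S₁ = 1}`. The quantile condition and the absence of an atom at `q` give
`T = {S₁ = 1, Y₁ ≥ q}` the same mass as `{S₀ = 1}`; exchanging the part of `{S₀ = 1}` outside
`T`, where `Y₁ ≤ q`, for the equally heavy part of `T` outside `{S₀ = 1}`, where `Y₁ ≥ q`, can only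
increase the integral of `Y₁`.
-/

open MeasureTheory ProbabilityTheory

/-- Conditional mean `E[X | A] = (∫_A X dP) / P(A)`. -/
noncomputable def condMean {Ω : Type*} [MeasurableSpace Ω] (P : Measure Ω)
    (A : Set Ω) (X : Ω → ℝ) : ℝ :=
  (∫ ω in A, X ω ∂P) / (P A).toReal

section CondMean

variable {α : Type*} [MeasurableSpace α] {μ : Measure α} {s t : Set α} {f g : α → ℝ}

lemma condMean_congr_set (h : s =ᵐ[μ] t) : condMean μ s f = condMean μ t f := by
  rw [condMean, condMean, setIntegral_congr_set h, measure_congr h]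

lemma condMean_congr_fun (hs : MeasurableSet s) (h : Set.EqOn f g s) :
    condMean μ s f = condMean μ s g := by
  rw [condMean, condMean, setIntegral_congr_fun hs h]

lemma condMean_sub (hf : IntegrableOn f s μ) (hg : IntegrableOn g s μ) :
    condMean μ s (fun x => f x - g x) = condMean μ s f - condMean μ s g := by
  rw [condMean, condMean, condMean, integral_sub hf hg, sub_div]

lemma condMean_le_condMean_of_measureReal_eq (hst : μ.real s = μ.real t)
    (h : ∫ x in s, f x ∂μ ≤ ∫ x in t, f x ∂μ) : condMean μ s f ≤ condMean μ t f := by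
  simp only [condMean, ← measureReal_def, hst]
  gcongr

variable [IsFiniteMeasure μ]

lemma setIntegral_le_setIntegral_of_measureReal_eq (c : ℝ)
    (hs : MeasurableSet s) (ht : MeasurableSet t)
    (hfs : IntegrableOn f s μ) (hft : IntegrableOn f t μ) (hst : μ.real s = μ.real t)
    (hle : ∀ᵐ x ∂μ, x ∈ s → x ∉ t → f x ≤ c) (hge : ∀ x ∈ t, c ≤ f x) :
    ∫ x in s, f x ∂μ ≤ ∫ x in t, f x ∂μ := by
  have hdiff : μ.real (s \ t) = μ.real (t \ s) := by
    have hs' := measureReal_inter_add_sdiff (μ := μ) (s := s) ht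
    have ht' := measureReal_inter_add_sdiff (μ := μ) (s := t) hs
    rw [Set.inter_comm] at ht'
    linarith
  have hst_le : ∫ x in s \ t, f x ∂μ ≤ c * μ.real (t \ s) := by
    calc ∫ x in s \ t, f x ∂μ ≤ ∫ _ in s \ t, c ∂μ :=
          setIntegral_mono_on_ae (hfs.mono_set Set.sdiff_subset) (integrableOn_const)
            (hs.diff ht) (hle.mono fun x hx hxst => hx hxst.1 hxst.2)
      _ = c * μ.real (t \ s) := by rw [setIntegral_const, smul_eq_mul, mul_comm, hdiff]
  have hts_ge : c * μ.real (t \ s) ≤ ∫ x in t \ s, f x ∂μ :=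
    setIntegral_ge_of_const_le_real (ht.diff hs) (measure_ne_top _ _)
      (fun x hx => hge x hx.1) (hft.mono_set Set.sdiff_subset)
  calc ∫ x in s, f x ∂μ = ∫ x in s ∩ t, f x ∂μ + ∫ x in s \ t, f x ∂μ :=
        (integral_inter_add_sdiff ht hfs).symm
    _ ≤ ∫ x in t ∩ s, f x ∂μ + ∫ x in t \ s, f x ∂μ := by
        rw [Set.inter_comm]; linarith
    _ = ∫ x in t, f x ∂μ := integral_inter_add_sdiff hs hft

lemma measureReal_and_le_add_measureReal_and_ge {p : α → Prop} {q : ℝ} (hf : Measurable f)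
    (hatom : μ {x | p x ∧ f x = q} = 0) :
    μ.real {x | p x ∧ f x ≤ q} + μ.real {x | p x ∧ q ≤ f x} = μ.real {x | p x} := by
  have hge : {x | p x ∧ q ≤ f x} =ᵐ[μ] {x | p x} \ {x | f x ≤ q} := by
    refine Filter.eventuallyEq_set.2 ?_
    filter_upwards [measure_eq_zero_iff_ae_notMem.1 hatom] with x hx
    exact ⟨fun ⟨hp, hq⟩ => ⟨hp, fun hq' => hx ⟨hp, le_antisymm hq' hq⟩⟩,
      fun ⟨hp, hq⟩ => ⟨hp, (not_le.1 hq).le⟩⟩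
  rw [measureReal_congr hge]
  exact measureReal_inter_add_sdiff (measurableSet_le hf measurable_const)

lemma condMean_sub_le_condMean_trimmed_sub {B C : Set α} {q : ℝ}
    (hB : MeasurableSet B) (hC : MeasurableSet C) (hBC : B ≤ᵐ[μ] C) (hfm : Measurable f)
    (hf : Integrable f μ) (hg : Integrable g μ) (hT : μ.real (C ∩ {x | q ≤ f x}) = μ.real B) :
    condMean μ (C ∩ B) (fun x => f x - g x)
      ≤ condMean μ (C ∩ {x | q ≤ f x}) f - condMean μ B g := by
  have hCB : (C ∩ B : Set α) =ᵐ[μ] B :=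
    Filter.EventuallyLE.antisymm (ae_of_all _ Set.inter_subset_right)
      (hBC.mono fun x hx hxB => ⟨hx hxB, hxB⟩)
  rw [condMean_congr_set hCB, condMean_sub hf.integrableOn hg.integrableOn]
  gcongr
  refine condMean_le_condMean_of_measureReal_eq hT.symm
    (setIntegral_le_setIntegral_of_measureReal_eq q hB
      (hC.inter (measurableSet_le measurable_const hfm)) hf.integrableOn hf.integrableOn hT.symm
      ?_ fun x hx => hx.2)
  filter_upwards [hBC] with x hx hxB hxT
  exact (not_le.1 fun hq => hxT ⟨hx hxB, hq⟩).le

end CondMean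

lemma ProbabilityTheory.IndepFun.condMean_inter_preimage {Ω β γ : Type*} [MeasurableSpace Ω]
    [mβ : MeasurableSpace β] [MeasurableSpace γ] {P : Measure Ω} [IsFiniteMeasure P]
    {X : Ω → β} {Z : Ω → γ} (h : IndepFun X Z P) (hX : Measurable X) (hZ : Measurable Z)
    {s : Set Ω} (hs : MeasurableSet[mβ.comap X] s) (hs0 : P s ≠ 0)
    {E : Set γ} (hE : MeasurableSet E) {g : γ → ℝ} (hg : Measurable g) :
    condMean P (s ∩ Z ⁻¹' E) (fun ω => g (Z ω)) = condMean P (Z ⁻¹' E) (fun ω => g (Z ω)) := by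
  have hint : ∫ ω in s ∩ Z ⁻¹' E, g (Z ω) ∂P = P.real s * ∫ ω in Z ⁻¹' E, g (Z ω) ∂P := by
    have hcomp : (fun ω => E.indicator g (Z ω)) = (Z ⁻¹' E).indicator (fun ω => g (Z ω)) :=
      funext fun ω => (Set.indicator_comp_right Z).symm
    have key := ((IndepFun_iff_Indep _ _ _).1 h).setIntegral_eq_mul hX.comap_le
      hZ.aemeasurable hs (hg.indicator hE).aestronglyMeasurable
    rwa [hcomp, setIntegral_indicator (hZ hE), integral_indicator (hZ hE)] at key
  have hmeas : P (s ∩ Z ⁻¹' E) = P s * P (Z ⁻¹' E) := h.meas_inter hs ⟨E, hE, rfl⟩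
  have hs0' : P.real s ≠ 0 := (measureReal_ne_zero_iff (measure_ne_top _ _)).2 hs0
  rw [condMean, condMean, hint, hmeas, ENNReal.toReal_mul, ← measureReal_def,
    mul_div_mul_left _ _ hs0']

section SampleSelection

variable {Ω : Type*} {Y1 Y0 Y : Ω → ℝ} {s1 s0 d S : Ω → Bool}

lemma setOf_treated_selected (hS : S = fun ω => if d ω then s1 ω else s0 ω) :
    {ω | d ω = true ∧ S ω = true} = {ω | d ω = true} ∩ {ω | s1 ω = true} := by
  subst hS; ext ω; cases h : d ω <;> simp [h]

lemma setOf_treated_selected_and (hS : S = fun ω => if d ω then s1 ω else s0 ω)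
    (hY : Y = fun ω => if d ω then Y1 ω else Y0 ω) (p : ℝ → Prop) :
    {ω | d ω = true ∧ S ω = true ∧ p (Y ω)}
      = {ω | d ω = true} ∩ {ω | s1 ω = true ∧ p (Y1 ω)} := by
  subst hS hY; ext ω; cases h : d ω <;> simp [h]

lemma setOf_control_selected (hS : S = fun ω => if d ω then s1 ω else s0 ω) :
    {ω | d ω = false ∧ S ω = true} = {ω | d ω = false} ∩ {ω | s0 ω = true} := by
  subst hS; ext ω; cases h : d ω <;> simp [h]

lemma measurableSet_selected_and {p : ℝ → Prop} (hp : MeasurableSet {y | p y}) :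
    MeasurableSet {z : ℝ × ℝ × Bool × Bool | z.2.2.1 = true ∧ p z.1} :=
  (measurable_snd.snd.fst (measurableSet_singleton true)).inter (measurable_fst hp)

variable [MeasurableSpace Ω] {P : Measure Ω}

lemma measure_setOf_eq_false_ne_zero [IsProbabilityMeasure P] (hdm : Measurable d)
    (hd : P {ω | d ω = true} < 1) : P {ω | d ω = false} ≠ 0 := by
  have hcompl : {ω | d ω = false} = {ω | d ω = true}ᶜ := by ext ω; simp
  have hdt : MeasurableSet {ω | d ω = true} := hdm (measurableSet_singleton true)
  rw [hcompl, prob_compl_eq_one_sub hdt]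
  exact (tsub_pos_of_lt hd).ne'

lemma measure_treated_selected (hindep : IndepFun d (fun ω => (Y1 ω, Y0 ω, s1 ω, s0 ω)) P)
    (hS : S = fun ω => if d ω then s1 ω else s0 ω) :
    P {ω | d ω = true ∧ S ω = true} = P {ω | d ω = true} * P {ω | s1 ω = true} := by
  rw [setOf_treated_selected hS]
  exact hindep.meas_inter ⟨{true}, trivial, rfl⟩
    ⟨_, measurable_snd.snd.fst (measurableSet_singleton true), rfl⟩

lemma measure_treated_selected_and
    (hindep : IndepFun d (fun ω => (Y1 ω, Y0 ω, s1 ω, s0 ω)) P)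
    (hS : S = fun ω => if d ω then s1 ω else s0 ω)
    (hY : Y = fun ω => if d ω then Y1 ω else Y0 ω) {p : ℝ → Prop} (hp : MeasurableSet {y | p y}) :
    P {ω | d ω = true ∧ S ω = true ∧ p (Y ω)}
      = P {ω | d ω = true} * P {ω | s1 ω = true ∧ p (Y1 ω)} := by
  rw [setOf_treated_selected_and hS hY]
  exact hindep.meas_inter ⟨{true}, trivial, rfl⟩ ⟨_, measurableSet_selected_and hp, rfl⟩

lemma condMean_treated_selected_and [IsFiniteMeasure P]
    (hindep : IndepFun d (fun ω => (Y1 ω, Y0 ω, s1 ω, s0 ω)) P)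
    (hdm : Measurable d) (hZ : Measurable fun ω => (Y1 ω, Y0 ω, s1 ω, s0 ω))
    (hS : S = fun ω => if d ω then s1 ω else s0 ω)
    (hY : Y = fun ω => if d ω then Y1 ω else Y0 ω) {p : ℝ → Prop} (hp : MeasurableSet {y | p y})
    (hd : P {ω | d ω = true} ≠ 0) :
    condMean P {ω | d ω = true ∧ S ω = true ∧ p (Y ω)} Y
      = condMean P {ω | s1 ω = true ∧ p (Y1 ω)} Y1 := by
  have hE := measurableSet_selected_and hp
  have hs : MeasurableSet ({ω | d ω = true} ∩ {ω | s1 ω = true ∧ p (Y1 ω)}) :=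
    (hdm (measurableSet_singleton true)).inter (hZ hE)
  rw [setOf_treated_selected_and hS hY, condMean_congr_fun hs (g := Y1)
    fun ω hω => by simp [hY, show d ω = true from hω.1]]
  exact hindep.condMean_inter_preimage hdm hZ ⟨{true}, trivial, rfl⟩ hd hE measurable_fst

lemma condMean_control_selected [IsFiniteMeasure P]
    (hindep : IndepFun d (fun ω => (Y1 ω, Y0 ω, s1 ω, s0 ω)) P)
    (hdm : Measurable d) (hZ : Measurable fun ω => (Y1 ω, Y0 ω, s1 ω, s0 ω))
    (hS : S = fun ω => if d ω then s1 ω else s0 ω)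
    (hY : Y = fun ω => if d ω then Y1 ω else Y0 ω) (hd : P {ω | d ω = false} ≠ 0) :
    condMean P {ω | d ω = false ∧ S ω = true} Y = condMean P {ω | s0 ω = true} Y0 := by
  have hE : MeasurableSet {z : ℝ × ℝ × Bool × Bool | z.2.2.2 = true} :=
    measurable_snd.snd.snd (measurableSet_singleton true)
  have hs : MeasurableSet ({ω | d ω = false} ∩ {ω | s0 ω = true}) :=
    (hdm (measurableSet_singleton false)).inter (hZ hE)
  rw [setOf_control_selected hS, condMean_congr_fun hs (g := Y0)
    fun ω hω => by simp [hY, show d ω = false from hω.1]]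
  exact hindep.condMean_inter_preimage hdm hZ ⟨{false}, trivial, rfl⟩ hd hE
    measurable_snd.fst

end SampleSelection

theorem lee_upper_bound_general {Ω : Type*} [MeasurableSpace Ω] (P : Measure Ω)
    [IsProbabilityMeasure P]
    (Y1 Y0 : Ω → ℝ) (s1 s0 d : Ω → Bool)
    (hY1m : Measurable Y1) (hY0m : Measurable Y0)
    (hs1m : Measurable s1) (hs0m : Measurable s0) (hdm : Measurable d)
    (hY1i : Integrable Y1 P) (hY0i : Integrable Y0 P)
    (hindep : IndepFun d (fun ω => (Y1 ω, Y0 ω, s1 ω, s0 ω)) P)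
    (hD0 : 0 < P {ω | d ω = true}) (hD1 : P {ω | d ω = true} < 1)
    (hS1 : 0 < P {ω | s1 ω = true})
    (hmono : ∀ᵐ ω ∂P, s0 ω = true → s1 ω = true)
    (p0 : ℝ) (hp0 : p0 = (P {ω | s0 ω = true}).toReal / (P {ω | s1 ω = true}).toReal)
    (S : Ω → Bool) (hS : S = fun ω => if d ω then s1 ω else s0 ω)
    (Y : Ω → ℝ) (hY : Y = fun ω => if d ω then Y1 ω else Y0 ω)
    (q : ℝ)
    (hq1 : (P {ω | d ω = true ∧ S ω = true ∧ Y ω ≤ q}).toReal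
        / (P {ω | d ω = true ∧ S ω = true}).toReal = 1 - p0)
    (hq2 : P {ω | d ω = true ∧ S ω = true ∧ Y ω = q} = 0) :
    condMean P {ω | s1 ω = true ∧ s0 ω = true} (fun ω => Y1 ω - Y0 ω)
      ≤ condMean P {ω | d ω = true ∧ S ω = true ∧ q ≤ Y ω} Y
        - condMean P {ω | d ω = false ∧ S ω = true} Y := by
  have hZ : Measurable fun ω => (Y1 ω, Y0 ω, s1 ω, s0 ω) :=
    hY1m.prodMk (hY0m.prodMk (hs1m.prodMk hs0m))
  have hd1 : P.real {ω | d ω = true} ≠ 0 := (measureReal_ne_zero_iff).2 hD0.ne'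
  have hsel : P.real {ω | s1 ω = true ∧ Y1 ω ≤ q}
      = P.real {ω | s1 ω = true} - P.real {ω | s0 ω = true} := by
    rw [measure_treated_selected_and hindep hS hY (p := (· ≤ q)) measurableSet_Iic,
      measure_treated_selected hindep hS, ENNReal.toReal_mul, ENNReal.toReal_mul] at hq1
    simp only [← measureReal_def, mul_div_mul_left _ _ hd1, hp0] at hq1
    have hs1 : P.real {ω | s1 ω = true} ≠ 0 := (measureReal_ne_zero_iff).2 hS1.ne'
    field_simp at hq1
    linarith
  have hatom : P {ω | s1 ω = true ∧ Y1 ω = q} = 0 := by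
    rw [measure_treated_selected_and hindep hS hY (p := (· = q)) (measurableSet_singleton q)]
      at hq2
    exact (mul_eq_zero.1 hq2).resolve_left hD0.ne'
  have hT : P.real {ω | s1 ω = true ∧ q ≤ Y1 ω} = P.real {ω | s0 ω = true} := by
    linarith [measureReal_and_le_add_measureReal_and_ge hY1m hatom]
  have hd0 := measure_setOf_eq_false_ne_zero hdm hD1
  rw [condMean_treated_selected_and hindep hdm hZ hS hY (p := (q ≤ ·)) measurableSet_Ici hD0.ne',
    condMean_control_selected hindep hdm hZ hS hY hd0]
  exact condMean_sub_le_condMean_trimmed_sub (hs0m (measurableSet_singleton true))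
    (hs1m (measurableSet_singleton true)) hmono hY1m hY1i hY0i hT

/-- Upper Lee bound under strong monotonicity: if `q` is the `(1 - p₀)`-quantile of the
observed outcome distribution of the selected treated (with no atom at `q`), then the
always-taker average treatment effect is at most the mean of the selected treated
outcomes trimmed from below at `q`, minus the mean outcome of the selected controls. -/
theorem lee_upper_bound {Ω : Type*} [MeasurableSpace Ω] (P : Measure Ω)
    [IsProbabilityMeasure P]
    (Y1 Y0 : Ω → ℝ) (s1 s0 d : Ω → Bool)
    (hY1m : Measurable Y1) (hY0m : Measurable Y0)
    (hs1m : Measurable s1) (hs0m : Measurable s0) (hdm : Measurable d)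
    (hY1i : Integrable Y1 P) (hY0i : Integrable Y0 P)
    (hindep : IndepFun d (fun ω => (Y1 ω, Y0 ω, s1 ω, s0 ω)) P)
    (hD0 : 0 < P {ω | d ω = true}) (hD1 : P {ω | d ω = true} < 1)
    (hS1 : 0 < P {ω | s1 ω = true}) (hS0 : 0 < P {ω | s0 ω = true})
    (hmono : ∀ᵐ ω ∂P, s0 ω = true → s1 ω = true)
    (p0 : ℝ) (hp0 : p0 = (P {ω | s0 ω = true}).toReal / (P {ω | s1 ω = true}).toReal)
    (S : Ω → Bool) (hS : S = fun ω => if d ω then s1 ω else s0 ω)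
    (Y : Ω → ℝ) (hY : Y = fun ω => if d ω then Y1 ω else Y0 ω)
    (q : ℝ)
    (hq1 : (P {ω | d ω = true ∧ S ω = true ∧ Y ω ≤ q}).toReal
        / (P {ω | d ω = true ∧ S ω = true}).toReal = 1 - p0)
    (hq2 : P {ω | d ω = true ∧ S ω = true ∧ Y ω = q} = 0) :
    condMean P {ω | s1 ω = true ∧ s0 ω = true} (fun ω => Y1 ω - Y0 ω)
      ≤ condMean P {ω | d ω = true ∧ S ω = true ∧ q ≤ Y ω} Y
        - condMean P {ω | d ω = false ∧ S ω = true} Y :=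
  lee_upper_bound_general P Y1 Y0 s1 s0 d hY1m hY0m hs1m hs0m hdm hY1i hY0i hindep hD0 hD1 hS1 hmono
    p0 hp0 S hS Y hY q hq1 hq2
end

section
/- In the sample selection setup with strong monotonicity, E[Y | D = 0, S = 1] = E[Y₀ | S₁ = 1, S₀ = 1]. That is, the observed mean outcome of the selected control units identifies the mean control potential outcome of the always-takers. -/
/-!
Among the controls the observed outcome is `Y₀` and the observed selection is `S₀`, so the
selected controls are `{D = 0, S₀ = 1}`. Since `D` is independent of `(Y₀, S₀)`, the factor
`P(D = 0) > 0` splits off both the numerator and the denominator of `E[Y₀ | D = 0, S₀ = 1]`,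
leaving `E[Y₀ | S₀ = 1]`; by strong monotonicity `{S₀ = 1}` is the set of always-takers up to a
null set.
-/

open MeasureTheory ProbabilityTheory

section CondMean

variable {Ω α β : Type*} [MeasurableSpace Ω] [MeasurableSpace α] [MeasurableSpace β]
  {P : Measure Ω} {A B : Set Ω} {X Z : Ω → ℝ}

lemma condMean_congr_set_s8 (h : A =ᵐ[P] B) : condMean P A X = condMean P B X := by
  rw [condMean, condMean, setIntegral_congr_set h, measure_congr h]

lemma condMean_congr_fun_s8 (hA : MeasurableSet A) (h : Set.EqOn X Z A) :
    condMean P A X = condMean P A Z := by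
  rw [condMean, condMean, setIntegral_congr_fun hA h]

lemma condMean_inter_preimage_of_indepFun [IsFiniteMeasure P] {f : Ω → α} {g : Ω → β}
    (hfg : IndepFun f g P) (hf : Measurable f) (hg : Measurable g) {s : Set α}
    (hs : MeasurableSet s) (hPs : P (f ⁻¹' s) ≠ 0) {t : Set β} (ht : MeasurableSet t)
    {Y : β → ℝ} (hY : AEStronglyMeasurable Y (P.map g)) :
    condMean P (f ⁻¹' s ∩ g ⁻¹' t) (Y ∘ g) = condMean P (g ⁻¹' t) (Y ∘ g) := by
  have hint : ∫ ω in f ⁻¹' s ∩ g ⁻¹' t, Y (g ω) ∂P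
      = P.real (f ⁻¹' s) * ∫ ω in g ⁻¹' t, Y (g ω) ∂P := by
    calc ∫ ω in f ⁻¹' s ∩ g ⁻¹' t, Y (g ω) ∂P
        = ∫ ω in f ⁻¹' s, t.indicator Y (g ω) ∂P := by
          rw [← setIntegral_indicator (hg ht)]; rfl
      _ = P.real (f ⁻¹' s) * ∫ ω, t.indicator Y (g ω) ∂P :=
          ((IndepFun_iff_Indep f g P).1 hfg).setIntegral_eq_mul hf.comap_le hg.aemeasurable
            ⟨s, hs, rfl⟩ (hY.indicator ht)
      _ = P.real (f ⁻¹' s) * ∫ ω in g ⁻¹' t, Y (g ω) ∂P := by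
          rw [← integral_indicator (hg ht)]; rfl
  have hmeas : P (f ⁻¹' s ∩ g ⁻¹' t) = P (f ⁻¹' s) * P (g ⁻¹' t) :=
    hfg.measure_inter_preimage_eq_mul s t hs ht
  have hPs' : P.real (f ⁻¹' s) ≠ 0 := (measureReal_ne_zero_iff (measure_ne_top _ _)).2 hPs
  simp only [condMean, Function.comp_apply, hint, hmeas, ENNReal.toReal_mul]
  exact mul_div_mul_left _ _ hPs'

end CondMean

theorem selected_controls_identify_always_takers_general {Ω : Type*} [MeasurableSpace Ω]
    (P : Measure Ω) [IsProbabilityMeasure P]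
    (Y1 Y0 : Ω → ℝ) (s1 s0 d : Ω → Bool)
    (hY0m : Measurable Y0)
    (hs0m : Measurable s0) (hdm : Measurable d)
    (hindep : IndepFun d (fun ω => (Y1 ω, Y0 ω, s1 ω, s0 ω)) P)
    (hD1 : P {ω | d ω = true} < 1)
    (hmono : ∀ᵐ ω ∂P, s0 ω = true → s1 ω = true)
    (S : Ω → Bool) (hS : S = fun ω => if d ω then s1 ω else s0 ω)
    (Y : Ω → ℝ) (hY : Y = fun ω => if d ω then Y1 ω else Y0 ω) :
    condMean P {ω | d ω = false ∧ S ω = true} Y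
      = condMean P {ω | s1 ω = true ∧ s0 ω = true} Y0 := by
  set g : Ω → ℝ × Bool := fun ω => (Y0 ω, s0 ω)
  set t : Set (ℝ × Bool) := {p | p.2 = true}
  have hg : Measurable g := hY0m.prodMk hs0m
  have ht : MeasurableSet t := measurable_snd (measurableSet_singleton true)
  have hdg : IndepFun d g P :=
    hindep.comp measurable_id (measurable_snd.fst.prodMk measurable_snd.snd.snd)
  have hPd : P (d ⁻¹' {false}) ≠ 0 := by
    have hcompl : d ⁻¹' {false} = {ω | d ω = true}ᶜ := by ext ω; simp
    have hdt : MeasurableSet {ω | d ω = true} := hdm (measurableSet_singleton true)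
    rw [hcompl, Ne, prob_compl_eq_zero_iff hdt]
    exact hD1.ne
  have hselected : {ω | d ω = false ∧ S ω = true} = d ⁻¹' {false} ∩ g ⁻¹' t := by
    ext ω; cases h : d ω <;> simp [hS, g, t, h]
  have halways : {ω | s1 ω = true ∧ s0 ω = true} =ᵐ[P] g ⁻¹' t := by
    rw [Filter.eventuallyEq_set]
    filter_upwards [hmono] with ω h
    exact ⟨And.right, fun hs0 => ⟨h hs0, hs0⟩⟩
  calc condMean P {ω | d ω = false ∧ S ω = true} Y
      = condMean P (d ⁻¹' {false} ∩ g ⁻¹' t) (Prod.fst ∘ g) := by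
        rw [hselected]
        refine condMean_congr_fun_s8 ((hdm (measurableSet_singleton false)).inter (hg ht)) ?_
        rintro ω ⟨hd : d ω = false, -⟩
        simp [hY, hd, g]
    _ = condMean P (g ⁻¹' t) (Prod.fst ∘ g) :=
        condMean_inter_preimage_of_indepFun hdg hdm hg (measurableSet_singleton false) hPd ht
          measurable_fst.aestronglyMeasurable
    _ = condMean P {ω | s1 ω = true ∧ s0 ω = true} Y0 := (condMean_congr_set_s8 halways).symm

/-- Under strong monotonicity, the observed mean outcome of the selected control units
identifies the mean control potential outcome of the always-takers:
`E[Y | D = 0, S = 1] = E[Y₀ | S₁ = 1, S₀ = 1]`. -/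
theorem selected_controls_identify_always_takers {Ω : Type*} [MeasurableSpace Ω]
    (P : Measure Ω) [IsProbabilityMeasure P]
    (Y1 Y0 : Ω → ℝ) (s1 s0 d : Ω → Bool)
    (hY1m : Measurable Y1) (hY0m : Measurable Y0)
    (hs1m : Measurable s1) (hs0m : Measurable s0) (hdm : Measurable d)
    (hY1i : Integrable Y1 P) (hY0i : Integrable Y0 P)
    (hindep : IndepFun d (fun ω => (Y1 ω, Y0 ω, s1 ω, s0 ω)) P)
    (hD0 : 0 < P {ω | d ω = true}) (hD1 : P {ω | d ω = true} < 1)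
    (hS1 : 0 < P {ω | s1 ω = true}) (hS0 : 0 < P {ω | s0 ω = true})
    (hmono : ∀ᵐ ω ∂P, s0 ω = true → s1 ω = true)
    (S : Ω → Bool) (hS : S = fun ω => if d ω then s1 ω else s0 ω)
    (Y : Ω → ℝ) (hY : Y = fun ω => if d ω then Y1 ω else Y0 ω) :
    condMean P {ω | d ω = false ∧ S ω = true} Y
      = condMean P {ω | s1 ω = true ∧ s0 ω = true} Y0 :=
  selected_controls_identify_always_takers_general P Y1 Y0 s1 s0 d hY0m hs0m hdm hindep hD1 hmono S
    hS Y hY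
end
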